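/- Let k ≥ 0 and m ≥ 0 be integers and let a, b, c, w ∈ ℂ. Assume (b)_k (c)_k ≠ 0, that (1+a−b)_m, (1+a−c)_m, (1/2+(a−w−m)/2)_m, (1+(a−w−m)/2)_m, and (w)_m are all nonzero, and that (w−a)_m ≠ 0. Then Σ_{n=0}^{m} [(a/2)_n (1/2+a/2)_n (1−k+a−b−c)_n (1+a−w)_n (−m)_n / (n! (1+a−b)_n (1+a−c)_n (1/2+(a−w−m)/2)_n (1+(a−w−m)/2)_n)] = [(w)_m / (w−a)_m] · Σ_{n=0}^{m} [(a)_n (b)_n (c)_n (−m)_n / (n! (1+a−b)_n (1+a−c)_n (w)_n)] · Q_k^{(2)}(n; a; b, c). -/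
import Mathlib


open Complex BigOperators

/-- The Pochhammer symbol `(c)_n = c (c+1) ⋯ (c+n−1)`. -/
noncomputable def poch (c : ℂ) (n : ℕ) : ℂ := ∏ i ∈ Finset.range n, (c + i)

/-- The dual Hahn type polynomial
`Q_k^{(2)}(n; a; b, c) = Σ_{j=0}^k (−n)_j (n+a)_j (−k)_j / (j! (b)_j (c)_j)`. -/
noncomputable def Q2 (k : ℕ) (a b c : ℂ) (n : ℕ) : ℂ :=
  ∑ j ∈ Finset.range (k + 1),
    poch (-(n : ℂ)) j * poch ((n : ℂ) + a) j * poch (-(k : ℂ)) j /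
      ((j.factorial : ℂ) * poch b j * poch c j)

set_option maxHeartbeats 1600000

lemma poch_zero (x : ℂ) : poch x 0 = 1 := Finset.prod_range_zero _
lemma poch_succ (x : ℂ) (n : ℕ) : poch x (n+1) = poch x n * (x + n) :=
  Finset.prod_range_succ _ _
lemma poch_succ' (x : ℂ) (n : ℕ) : poch x (n+1) = x * poch (x+1) n := by
  rw [poch, Finset.prod_range_succ']
  simp only [Nat.cast_zero, add_zero, mul_comm]
  congr 1
  refine Finset.prod_congr rfl fun i _ => ?_
  push_cast; ring
lemma poch_add (x : ℂ) (p q : ℕ) : poch x (p+q) = poch x p * poch (x+p) q := by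
  induction q with
  | zero => simp [poch_zero]
  | succ q ih =>
    rw [← Nat.add_assoc, poch_succ, ih, poch_succ]
    push_cast; ring

lemma poch_reflect (x : ℂ) (n : ℕ) : poch x n = (-1)^n * poch (1 - x - n) n := by
  have h : poch (1 - x - n) n = ∏ i ∈ Finset.range n, (fun j : ℕ => -(x + (j : ℂ))) (n - 1 - i) := by
    rw [poch]
    refine Finset.prod_congr rfl fun i hi => ?_
    rw [Finset.mem_range] at hi
    have h1 : (((n - 1 - i : ℕ)) : ℂ) = (n : ℂ) - 1 - i := by
      have : n - 1 - i = n - (1 + i) := by omega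
      rw [this, Nat.cast_sub (by omega : 1 + i ≤ n)]
      push_cast; ring
    simp only [h1]; ring
  rw [h, Finset.prod_range_reflect (fun j : ℕ => -(x + (j : ℂ))) n]
  have h2 : ∏ j ∈ Finset.range n, (fun j : ℕ => -(x + (j : ℂ))) j
      = (-1)^n * poch x n := by
    rw [show (∏ j ∈ Finset.range n, (fun j : ℕ => -(x + (j:ℂ))) j)
        = ∏ j ∈ Finset.range n, (-1) * (x + (j:ℂ)) from
      Finset.prod_congr rfl fun i _ => by ring]
    rw [Finset.prod_mul_distrib, Finset.prod_const, Finset.card_range, poch]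
  rw [h2, ← mul_assoc, ← mul_pow]
  ring_nf

-- zero lemma
lemma poch_neg_nat_eq_zero {n j : ℕ} (h : n < j) : poch (-(n:ℂ)) j = 0 := by
  rw [poch]
  refine Finset.prod_eq_zero (Finset.mem_range.2 h) ?_
  simp

-- factorial lemma
lemma poch_factorial (s j : ℕ) :
    (s.factorial : ℂ) * poch ((s:ℂ)+1) j = ((s+j).factorial : ℂ) := by
  induction j with
  | zero => simp [poch_zero]
  | succ j ih =>
    rw [poch_succ, ← mul_assoc, ih, show s + (j+1) = (s+j)+1 from rfl,
      Nat.factorial_succ]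
    push_cast; ring

lemma poch_neg_cast (j s : ℕ) :
    poch (-((j+s:ℕ):ℂ)) j = (-1)^j * poch ((s:ℂ)+1) j := by
  rw [poch_reflect (-((j+s:ℕ):ℂ)) j]
  congr 2
  push_cast; ring

lemma poch_sub_one (x : ℂ) (j : ℕ) :
    poch (x-1) j = poch x j - j * poch x (j-1) := by
  cases j with
  | zero => simp [poch_zero]
  | succ i =>
    rw [poch_succ', show x - 1 + 1 = x by ring, poch_succ]
    simp only [Nat.add_sub_cancel]
    push_cast; ring

lemma poch_dup (x : ℂ) (j : ℕ) :
    poch x (2*j) = 4^j * poch (x/2) j * poch (x/2 + 1/2) j := by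
  induction j with
  | zero => simp [poch_zero]
  | succ j ih =>
    rw [show 2*(j+1) = (2*j) + 1 + 1 from rfl, poch_succ, poch_succ,
      ih, poch_succ (x/2), poch_succ (x/2+1/2)]
    push_cast; ring

lemma poch_binom (u v : ℂ) (M : ℕ) :
    poch (u+v) M = ∑ s ∈ Finset.range (M+1),
      (M.choose s : ℂ) * poch u s * poch v (M-s) := by
  induction M with
  | zero => simp [poch_zero]
  | succ M ih =>
    rw [poch_succ, ih, Finset.sum_mul]
    have key : ∀ s ∈ Finset.range (M+1),
        (M.choose s : ℂ) * poch u s * poch v (M-s) * (u+v+M)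
        = (M.choose s : ℂ) * poch u (s+1) * poch v (M-s)
          + (M.choose s : ℂ) * poch u s * poch v (M+1-s) := by
      intro s hs
      rw [Finset.mem_range] at hs
      have hs' : s ≤ M := by omega
      rw [poch_succ u s, show M+1-s = (M-s)+1 by omega, poch_succ v (M-s),
        Nat.cast_sub hs']
      ring
    rw [Finset.sum_congr rfl key, Finset.sum_add_distrib]
    have expand : ∑ s ∈ Finset.range (M+2),
        ((M+1).choose s : ℂ) * poch u s * poch v (M+1-s)
        = (∑ s ∈ Finset.range (M+1), (M.choose s : ℂ) * poch u (s+1) * poch v (M-s))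
          + ((∑ s ∈ Finset.range (M+1), (M.choose (s+1) : ℂ) * poch u (s+1) * poch v (M-s))
            + poch v (M+1)) := by
      rw [Finset.sum_range_succ'
        (fun s => (((M+1).choose s : ℂ)) * poch u s * poch v (M+1-s)) (M+1)]
      simp only [Nat.choose_succ_succ, Nat.succ_sub_succ, Nat.choose_zero_right,
        Nat.cast_add, poch_zero, Nat.sub_zero, Nat.cast_one]
      rw [Finset.sum_congr rfl (fun s (hs : s ∈ Finset.range (M+1)) => by
        show ((M.choose s : ℂ) + (M.choose (s+1) : ℂ)) * poch u (s+1) * poch v (M-s)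
            = (M.choose s : ℂ) * poch u (s+1) * poch v (M-s)
              + (M.choose (s+1) : ℂ) * poch u (s+1) * poch v (M-s)
        ring), Finset.sum_add_distrib]
      ring
    have h2 : ∑ s ∈ Finset.range (M+1), (M.choose s : ℂ) * poch u s * poch v (M+1-s)
        = (∑ s ∈ Finset.range (M+1), (M.choose (s+1) : ℂ) * poch u (s+1) * poch v (M-s))
          + poch v (M+1) := by
      have := Finset.sum_range_succ'
        (fun s => ((M.choose s : ℂ)) * poch u s * poch v (M+1-s)) M
      simp only [Nat.succ_sub_succ, Nat.choose_zero_right, Nat.cast_one, poch_zero,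
        Nat.sub_zero, one_mul] at this
      calc ∑ s ∈ Finset.range (M+1), (M.choose s : ℂ) * poch u s * poch v (M+1-s)
          = (∑ s ∈ Finset.range M, (M.choose (s+1) : ℂ) * poch u (s+1) * poch v (M-s))
            + poch v (M+1) := this
        _ = _ := by
            rw [Finset.sum_range_succ
              (fun s => ((M.choose (s+1) : ℂ)) * poch u (s+1) * poch v (M-s)) M]
            simp [Nat.choose_succ_self]
    rw [expand, h2]

lemma vand0 (x y : ℂ) (M : ℕ) :
    ∑ s ∈ Finset.range (M+1),
      (-1)^s * (M.choose s : ℂ) * poch x s * poch (y+(s:ℂ)) (M-s)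
    = poch (y-x) M := by
  rw [← Finset.sum_range_reflect
    (fun s => (-1)^s * (M.choose s : ℂ) * poch x s * poch (y+(s:ℂ)) (M-s)) (M+1)]
  have key : ∀ s ∈ Finset.range (M+1),
      (-1)^(M+1-1-s) * ((M.choose (M+1-1-s)) : ℂ) * poch x (M+1-1-s)
        * poch (y+((M+1-1-s : ℕ):ℂ)) (M-(M+1-1-s))
      = (-1)^M * ((M.choose s : ℂ) * poch (1-y-M) s * poch x (M-s)) := by
    intro s hs
    rw [Finset.mem_range] at hs
    have hs' : s ≤ M := by omega
    have e1 : M+1-1-s = M-s := by omega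
    have e2 : M-(M-s) = s := by omega
    rw [e1, e2, Nat.choose_symm hs']
    have e3 : poch (y+((M-s : ℕ):ℂ)) s = (-1)^s * poch (1-y-M) s := by
      rw [poch_reflect (y+((M-s : ℕ):ℂ)) s]
      congr 2
      rw [Nat.cast_sub hs']
      ring
    rw [e3]
    have e4 : ((-1:ℂ))^(M-s) * (-1)^s = (-1)^M := by
      rw [← pow_add]; congr 1; omega
    linear_combination (↑(M.choose s) * poch x (M-s) * poch (1-y-(M:ℂ)) s) * e4
  rw [Finset.sum_congr rfl key, ← Finset.mul_sum, ← poch_binom]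
  rw [poch_reflect (y-x) M]
  congr 2
  ring

lemma poch_prefix_ne_zero {y : ℂ} {M s : ℕ} (hy : poch y M ≠ 0) (hs : s ≤ M) :
    poch y s ≠ 0 := by
  obtain ⟨q, rfl⟩ := Nat.exists_eq_add_of_le hs
  rw [poch_add] at hy
  exact left_ne_zero_of_mul hy

lemma poch_choose {M s : ℕ} (hs : s ≤ M) :
    poch (((M-s : ℕ):ℂ) + 1) s = (M.choose s : ℂ) * (s.factorial : ℂ) := by
  have hf : (((M-s).factorial : ℕ) : ℂ) ≠ 0 := by
    exact_mod_cast Nat.cast_ne_zero.2 (Nat.factorial_ne_zero _)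
  apply mul_left_cancel₀ hf
  rw [poch_factorial (M-s) s, show (M-s)+s = M by omega]
  have := Nat.choose_mul_factorial_mul_factorial hs
  calc (M.factorial : ℂ) = ((M.choose s * s.factorial * (M-s).factorial : ℕ) : ℂ) := by
        rw [this]
    _ = _ := by push_cast; ring

lemma vand1 (x y : ℂ) (M : ℕ) (hy : poch y M ≠ 0) :
    ∑ s ∈ Finset.range (M+1),
      poch (-(M:ℂ)) s * poch x s / ((s.factorial : ℂ) * poch y s)
    = poch (y-x) M / poch y M := by
  have key : ∀ s ∈ Finset.range (M+1),
      poch (-(M:ℂ)) s * poch x s / ((s.factorial : ℂ) * poch y s)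
      = ((-1)^s * (M.choose s : ℂ) * poch x s * poch (y+(s:ℂ)) (M-s)) / poch y M := by
    intro s hs
    rw [Finset.mem_range] at hs
    have hs' : s ≤ M := by omega
    have h1 : poch (-(M:ℂ)) s = (-1)^s * poch (((M-s : ℕ):ℂ)+1) s := by
      have := poch_neg_cast s (M-s)
      rw [show s + (M-s) = M by omega] at this
      exact this
    have hyM : poch y M = poch y s * poch (y+(s:ℂ)) (M-s) := by
      have := poch_add y s (M-s)
      rw [show s + (M-s) = M by omega] at this
      exact this
    have hys : poch y s ≠ 0 := poch_prefix_ne_zero hy hs'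
    have hyt : poch (y+(s:ℂ)) (M-s) ≠ 0 := by
      rw [hyM] at hy
      exact right_ne_zero_of_mul hy
    have hsf : ((s.factorial : ℕ) : ℂ) ≠ 0 := by
      exact_mod_cast Nat.cast_ne_zero.2 (Nat.factorial_ne_zero _)
    rw [h1, poch_choose hs', hyM]
    field_simp
  rw [Finset.sum_congr rfl key, ← Finset.sum_div, vand0]

lemma sum_triangle {N : ℕ} (f : ℕ → ℕ → ℂ) (h : ∀ i j, j < i → f i j = 0) :
    ∑ j ∈ Finset.range (N+1), ∑ i ∈ Finset.range (j+1), f i j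
    = ∑ i ∈ Finset.range (N+1), ∑ j ∈ Finset.range (N+1), f i j := by
  have step : ∀ j ∈ Finset.range (N+1),
      ∑ i ∈ Finset.range (j+1), f i j = ∑ i ∈ Finset.range (N+1), f i j := by
    intro j hj
    rw [Finset.mem_range] at hj
    refine Finset.sum_subset (Finset.range_subset_range.2 (by omega)) ?_
    intro i _ hi
    rw [Finset.mem_range, not_lt] at hi
    exact h i j (by omega)
  rw [Finset.sum_congr rfl step]
  exact Finset.sum_comm

lemma sum_shift {N i : ℕ} (hi : i ≤ N) (g : ℕ → ℂ) (h : ∀ n, n < i → g n = 0) :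
    ∑ n ∈ Finset.range (N+1), g n = ∑ s ∈ Finset.range (N+1-i), g (i+s) := by
  have e1 : ∑ n ∈ Finset.range (N+1), g n
      = ∑ n ∈ Finset.Ico i (N+1), g n := by
    rw [Finset.range_eq_Ico, ← Finset.sum_Ico_consecutive g (Nat.zero_le i) (by omega)]
    have : ∑ n ∈ Finset.Ico 0 i, g n = 0 :=
      Finset.sum_eq_zero (fun n hn => h n (by rw [Finset.mem_Ico] at hn; omega))
    rw [this, zero_add]
  rw [e1, Finset.sum_Ico_eq_sum_range]

lemma poch_reflect' (x : ℂ) (n : ℕ) : poch (1 - x - n) n = (-1)^n * poch x n := by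
  rw [poch_reflect x n, ← mul_assoc, ← mul_pow]
  norm_num

lemma factorial_ne_zero' (n : ℕ) : ((n.factorial : ℕ) : ℂ) ≠ 0 :=
  Nat.cast_ne_zero.2 (Nat.factorial_ne_zero _)


lemma saal (a b c : ℂ) (N : ℕ)
    (hC : poch (1+a-b) N ≠ 0) (hD : poch (1+a-c) N ≠ 0) :
    ∑ j ∈ Finset.range (N+1),
      poch (-(N:ℂ)) j * poch (a+N) j * poch (1+a-b-c) j /
        ((j.factorial : ℂ) * poch (1+a-b) j * poch (1+a-c) j)
    = poch b N * poch c N / (poch (1+a-b) N * poch (1+a-c) N) := by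
  set C := 1+a-b with hCdef
  set D := 1+a-c with hDdef
  have step1 : ∀ j ∈ Finset.range (N+1),
      poch (-(N:ℂ)) j * poch (a+N) j * poch (1+a-b-c) j /
        ((j.factorial : ℂ) * poch C j * poch D j)
      = ∑ i ∈ Finset.range (j+1),
          poch (-(N:ℂ)) j * poch (a+N) j / ((j.factorial : ℂ) * poch C j) *
            (poch (-(j:ℂ)) i * poch b i / ((i.factorial : ℂ) * poch D i)) := by
    intro j hj
    rw [Finset.mem_range] at hj
    have hDj : poch D j ≠ 0 := poch_prefix_ne_zero hD (by omega)
    have hv := vand1 b D j hDj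
    rw [← Finset.mul_sum, hv, show D - b = 1+a-b-c by rw [hDdef]; ring]
    have hfj := factorial_ne_zero' j
    have hCj : poch C j ≠ 0 := poch_prefix_ne_zero hC (by omega)
    field_simp <;> ring
  rw [Finset.sum_congr rfl step1]
  rw [sum_triangle _ (fun i j hji => by
    rw [poch_neg_nat_eq_zero hji]
    ring)]
  have step3 : ∀ i ∈ Finset.range (N+1),
      ∑ j ∈ Finset.range (N+1),
        poch (-(N:ℂ)) j * poch (a+N) j / ((j.factorial : ℂ) * poch C j) *
          (poch (-(j:ℂ)) i * poch b i / ((i.factorial : ℂ) * poch D i))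
      = ((-1)^N * poch b N / poch C N) *
          (poch (-(N:ℂ)) i * poch (a+N) i / ((i.factorial : ℂ) * poch D i)) := by
    intro i hi
    rw [Finset.mem_range] at hi
    have hiN : i ≤ N := by omega
    have hCsplit : poch C N = poch C i * poch (C+(i:ℂ)) (N-i) := by
      have := poch_add C i (N-i); rw [show i+(N-i) = N by omega] at this; exact this
    have hCi : poch C i ≠ 0 := poch_prefix_ne_zero hC hiN
    have hCt : poch (C+(i:ℂ)) (N-i) ≠ 0 := by
      rw [hCsplit] at hC; exact right_ne_zero_of_mul hC
    have hDi : poch D i ≠ 0 := poch_prefix_ne_zero hD hiN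
    rw [sum_shift hiN _ (fun n hn => by
      rw [poch_neg_nat_eq_zero hn]
      ring)]
    have per : ∀ s ∈ Finset.range (N+1-i),
        poch (-(N:ℂ)) (i+s) * poch (a+N) (i+s) / (((i+s).factorial : ℂ) * poch C (i+s)) *
          (poch (-((i+s : ℕ):ℂ)) i * poch b i / ((i.factorial : ℂ) * poch D i))
        = ((-1)^i * poch (-(N:ℂ)) i * poch (a+N) i * poch b i /
            ((i.factorial : ℂ) * poch C i * poch D i)) *
          (poch (-((N-i : ℕ):ℂ)) s * poch (a+(N:ℂ)+i) s /
            ((s.factorial : ℂ) * poch (C+(i:ℂ)) s)) := by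
      intro s hs
      rw [Finset.mem_range] at hs
      have hsNi : s ≤ N-i := by omega
      have e1 : poch (-(N:ℂ)) (i+s) = poch (-(N:ℂ)) i * poch (-((N-i:ℕ):ℂ)) s := by
        rw [poch_add]
        congr 2
        rw [Nat.cast_sub hiN]; ring
      have e2 : poch (a+N) (i+s) = poch (a+N) i * poch (a+(N:ℂ)+i) s := by
        rw [poch_add]
      have e3 : poch C (i+s) = poch C i * poch (C+(i:ℂ)) s := poch_add C i s
      have e4 : poch (-((i+s : ℕ):ℂ)) i = (-1)^i * poch ((s:ℂ)+1) i := poch_neg_cast i s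
      have e5 : ((s.factorial : ℕ):ℂ) * poch ((s:ℂ)+1) i = (((s+i).factorial : ℕ):ℂ) :=
        poch_factorial s i
      have e6 : (((i+s).factorial : ℕ) : ℂ) = (((s+i).factorial : ℕ) : ℂ) := by
        rw [Nat.add_comm]
      have hCs : poch (C+(i:ℂ)) s ≠ 0 := poch_prefix_ne_zero hCt hsNi
      have hfs := factorial_ne_zero' s
      have hfi := factorial_ne_zero' i
      have hps : poch ((s:ℂ)+1) i ≠ 0 := by
        intro h0
        rw [h0, mul_zero] at e5
        exact (factorial_ne_zero' (s+i)) e5.symm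
      rw [e1, e2, e3, e4, e6, ← e5]
      field_simp <;> ring
    rw [Finset.sum_congr rfl per, ← Finset.mul_sum,
      show N+1-i = (N-i)+1 by omega]
    have hv2 := vand1 (a+(N:ℂ)+i) (C+(i:ℂ)) (N-i) hCt
    rw [hv2]
    have e7 : poch (C+(i:ℂ) - (a+(N:ℂ)+i)) (N-i) = (-1)^(N-i) * poch (b+(i:ℂ)) (N-i) := by
      rw [show C+(i:ℂ) - (a+(N:ℂ)+i) = 1 - (b+(i:ℂ)) - ((N-i:ℕ):ℂ) by
        rw [hCdef, Nat.cast_sub hiN]; ring]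
      exact poch_reflect' (b+(i:ℂ)) (N-i)
    have e8 : poch b N = poch b i * poch (b+(i:ℂ)) (N-i) := by
      have := poch_add b i (N-i); rw [show i+(N-i) = N by omega] at this; exact this
    have e9 : ((-1:ℂ))^N = (-1)^i * (-1)^(N-i) := by
      rw [← pow_add]; congr 1; omega
    rw [e7, hCsplit, e8, e9]
    have hfi := factorial_ne_zero' i
    have hbt : poch (C+(i:ℂ)) (N-i) ≠ 0 := hCt
    field_simp <;> ring
  rw [Finset.sum_congr rfl step3, ← Finset.mul_sum]
  have hv3 := vand1 (a+(N:ℂ)) D N hD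
  rw [hv3]
  have e10 : poch (D - (a+(N:ℂ))) N = (-1)^N * poch c N := by
    rw [show D - (a+(N:ℂ)) = 1 - c - (N:ℂ) by rw [hDdef]; ring]
    exact poch_reflect' c N
  rw [e10]
  have e11 : ((-1:ℂ))^N * (-1)^N = 1 := by
    rw [← pow_add, ← two_mul, pow_mul]
    norm_num
  field_simp
  linear_combination (poch b N * poch c N) * e11

lemma poch_zero_base {j : ℕ} (hj : 0 < j) : poch (0:ℂ) j = 0 := by
  rw [poch]
  refine Finset.prod_eq_zero (Finset.mem_range.2 hj) ?_
  simp

lemma Q2_zero (a b c : ℂ) (n : ℕ) : Q2 0 a b c n = 1 := by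
  rw [Q2]
  simp [poch_zero]

lemma Q2_at_zero (k : ℕ) (a b c : ℂ) : Q2 k a b c 0 = 1 := by
  rw [Q2, Finset.sum_eq_single 0]
  · simp [poch_zero]
  · intro j _ hj
    rw [show (-(0:ℕ):ℂ) = 0 by simp, poch_zero_base (by omega)]
    simp
  · intro h
    exact absurd (Finset.mem_range.2 (by omega)) h

lemma Q2_rec (k M : ℕ) (a b c : ℂ) (hb : b ≠ 0) (hc : c ≠ 0) :
    Q2 (k+1) a b c (M+1) = Q2 k a b c (M+1)
      + (((M+1 : ℕ):ℂ) * (((M+1 : ℕ):ℂ)+a) / (b*c)) * Q2 k (a+2) (b+1) (c+1) M := by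
  rw [Q2]
  have e0 : ∀ i : ℕ, poch (-((k+1:ℕ):ℂ)) i
      = poch (-(k:ℂ)) i - i * poch (-(k:ℂ)) (i-1) := by
    intro i
    rw [show (-((k+1:ℕ):ℂ)) = -(k:ℂ) - 1 by push_cast; ring]
    exact poch_sub_one _ i
  rw [Finset.sum_congr rfl (fun i _ => by rw [e0 i])]
  have split : ∀ i ∈ Finset.range (k+2),
      poch (-((M+1:ℕ):ℂ)) i * poch (((M+1:ℕ):ℂ)+a) i *
        (poch (-(k:ℂ)) i - i * poch (-(k:ℂ)) (i-1)) /
        ((i.factorial : ℂ) * poch b i * poch c i)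
      = poch (-((M+1:ℕ):ℂ)) i * poch (((M+1:ℕ):ℂ)+a) i * poch (-(k:ℂ)) i /
          ((i.factorial : ℂ) * poch b i * poch c i)
        - poch (-((M+1:ℕ):ℂ)) i * poch (((M+1:ℕ):ℂ)+a) i *
            ((i:ℂ) * poch (-(k:ℂ)) (i-1)) /
          ((i.factorial : ℂ) * poch b i * poch c i) := by
    intro i _
    ring
  rw [Finset.sum_congr rfl split, Finset.sum_sub_distrib]
  have first : ∑ i ∈ Finset.range (k+2),
      poch (-((M+1:ℕ):ℂ)) i * poch (((M+1:ℕ):ℂ)+a) i * poch (-(k:ℂ)) i /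
        ((i.factorial : ℂ) * poch b i * poch c i) = Q2 k a b c (M+1) := by
    rw [Finset.sum_range_succ, poch_neg_nat_eq_zero (show k < k+1 by omega), Q2]
    simp
  rw [first]
  have second : ∑ i ∈ Finset.range (k+2),
      poch (-((M+1:ℕ):ℂ)) i * poch (((M+1:ℕ):ℂ)+a) i *
        ((i:ℂ) * poch (-(k:ℂ)) (i-1)) / ((i.factorial : ℂ) * poch b i * poch c i)
      = -((((M+1 : ℕ):ℂ) * (((M+1 : ℕ):ℂ)+a) / (b*c)) * Q2 k (a+2) (b+1) (c+1) M) := by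
    rw [Finset.sum_range_succ']
    have g0 : poch (-((M+1:ℕ):ℂ)) 0 * poch (((M+1:ℕ):ℂ)+a) 0 *
        (((0:ℕ):ℂ) * poch (-(k:ℂ)) (0-1)) /
        (((Nat.factorial 0 : ℕ) : ℂ) * poch b 0 * poch c 0) = 0 := by
      simp
    rw [g0, add_zero]
    have per : ∀ i ∈ Finset.range (k+1),
        poch (-((M+1:ℕ):ℂ)) (i+1) * poch (((M+1:ℕ):ℂ)+a) (i+1) *
          (((i+1 : ℕ):ℂ) * poch (-(k:ℂ)) (i+1-1)) /
          (((i+1).factorial : ℂ) * poch b (i+1) * poch c (i+1))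
        = -((((M+1 : ℕ):ℂ) * (((M+1 : ℕ):ℂ)+a) / (b*c)) *
            (poch (-(M:ℂ)) i * poch ((M:ℂ)+(a+2)) i * poch (-(k:ℂ)) i /
              ((i.factorial : ℂ) * poch (b+1) i * poch (c+1) i))) := by
      intro i _
      have p1 : poch (-((M+1:ℕ):ℂ)) (i+1) = -((M+1:ℕ):ℂ) * poch (-(M:ℂ)) i := by
        rw [poch_succ']
        congr 2
        push_cast; ring
      have p2 : poch (((M+1:ℕ):ℂ)+a) (i+1) = (((M+1:ℕ):ℂ)+a) * poch ((M:ℂ)+(a+2)) i := by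
        rw [poch_succ']
        congr 2
        push_cast; ring
      have p3 : poch b (i+1) = b * poch (b+1) i := poch_succ' b i
      have p4 : poch c (i+1) = c * poch (c+1) i := poch_succ' c i
      have p5 : (((i+1).factorial : ℕ):ℂ) = ((i+1:ℕ):ℂ) * ((i.factorial : ℕ):ℂ) := by
        rw [Nat.factorial_succ]; push_cast; ring
      rw [p1, p2, p3, p4, p5, Nat.add_sub_cancel]
      have hi1 : (i:ℂ) + 1 ≠ 0 := by
        have h' : ((i+1:ℕ):ℂ) ≠ 0 := Nat.cast_ne_zero.2 (by omega)
        push_cast at h'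
        exact h'
      have hfi := factorial_ne_zero' i
      by_cases hbp : poch (b+1) i = 0
      · rw [hbp]; simp
      by_cases hcp : poch (c+1) i = 0
      · rw [hcp]; simp
      push_cast
      field_simp
    rw [Finset.sum_congr rfl per, Finset.sum_neg_distrib, ← Finset.mul_sum, Q2]
  rw [second]
  ring

lemma extSaal : ∀ (k : ℕ) (a b c : ℂ) (N : ℕ), poch b k * poch c k ≠ 0 →
    poch (1+a-b) N ≠ 0 → poch (1+a-c) N ≠ 0 →
    ∑ j ∈ Finset.range (N+1),
      poch (-(N:ℂ)) j * poch (a+N) j * poch (1+a-b-c-k) j /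
        ((j.factorial : ℂ) * poch (1+a-b) j * poch (1+a-c) j)
    = poch b N * poch c N * Q2 k a b c N / (poch (1+a-b) N * poch (1+a-c) N) := by
  intro k
  induction k with
  | zero =>
    intro a b c N _ hC hD
    rw [show (1+a-b-c-((0:ℕ):ℂ)) = 1+a-b-c by push_cast; ring]
    rw [Q2_zero, saal a b c N hC hD]
    ring
  | succ k ih =>
    intro a b c N hbc hC hD
    match N with
    | 0 =>
      rw [Q2_at_zero]
      simp [poch_zero]
    | M+1 =>
      have hb : b ≠ 0 := by
        intro h0
        apply hbc
        rw [poch_succ' b k, h0]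
        ring
      have hc : c ≠ 0 := by
        intro h0
        apply hbc
        rw [poch_succ' c k, h0]
        ring
      have hbc' : poch (b+1) k * poch (c+1) k ≠ 0 := by
        intro h0
        apply hbc
        rw [poch_succ' b k, poch_succ' c k]
        calc b * poch (b+1) k * (c * poch (c+1) k)
            = (b*c) * (poch (b+1) k * poch (c+1) k) := by ring
          _ = 0 := by rw [h0]; ring
      have hCC : (1+a-b) ≠ 0 := by
        intro h0; apply hC
        rw [poch_succ' (1+a-b) M, h0]; ring
      have hDD : (1+a-c) ≠ 0 := by
        intro h0; apply hD
        rw [poch_succ' (1+a-c) M, h0]; ring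
      have hC1 : poch (1+(a+2)-(b+1)) M ≠ 0 := by
        intro h0; apply hC
        rw [poch_succ' (1+a-b) M, show (1+a-b)+1 = 1+(a+2)-(b+1) by ring, h0]; ring
      have hD1 : poch (1+(a+2)-(c+1)) M ≠ 0 := by
        intro h0; apply hD
        rw [poch_succ' (1+a-c) M, show (1+a-c)+1 = 1+(a+2)-(c+1) by ring, h0]; ring
      -- rewrite the summand using poch_sub_one
      have e0 : ∀ j : ℕ, poch (1+a-b-c-((k+1:ℕ):ℂ)) j
          = poch (1+a-b-c-k) j - j * poch (1+a-b-c-k) (j-1) := by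
        intro j
        rw [show (1+a-b-c-((k+1:ℕ):ℂ)) = (1+a-b-c-k) - 1 by push_cast; ring]
        exact poch_sub_one _ j
      have split : ∀ j ∈ Finset.range (M+2),
          poch (-((M+1:ℕ):ℂ)) j * poch (a+((M+1:ℕ):ℂ)) j * poch (1+a-b-c-((k+1:ℕ):ℂ)) j /
            ((j.factorial : ℂ) * poch (1+a-b) j * poch (1+a-c) j)
          = poch (-((M+1:ℕ):ℂ)) j * poch (a+((M+1:ℕ):ℂ)) j * poch (1+a-b-c-(k:ℂ)) j /
              ((j.factorial : ℂ) * poch (1+a-b) j * poch (1+a-c) j)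
            - poch (-((M+1:ℕ):ℂ)) j * poch (a+((M+1:ℕ):ℂ)) j *
                ((j:ℂ) * poch (1+a-b-c-(k:ℂ)) (j-1)) /
              ((j.factorial : ℂ) * poch (1+a-b) j * poch (1+a-c) j) := by
        intro j _
        rw [e0 j]
        ring
      rw [show (M+1)+1 = M+2 from rfl, Finset.sum_congr rfl split, Finset.sum_sub_distrib]
      have hbk : poch b k ≠ 0 := poch_prefix_ne_zero (left_ne_zero_of_mul hbc) (by omega)
      have hck : poch c k ≠ 0 := poch_prefix_ne_zero (right_ne_zero_of_mul hbc) (by omega)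
      have first : ∑ j ∈ Finset.range (M+2),
          poch (-((M+1:ℕ):ℂ)) j * poch (a+((M+1:ℕ):ℂ)) j * poch (1+a-b-c-(k:ℂ)) j /
            ((j.factorial : ℂ) * poch (1+a-b) j * poch (1+a-c) j)
          = poch b (M+1) * poch c (M+1) * Q2 k a b c (M+1) /
              (poch (1+a-b) (M+1) * poch (1+a-c) (M+1)) :=
        ih a b c (M+1) (mul_ne_zero hbk hck) hC hD
      rw [first]
      have second : ∑ j ∈ Finset.range (M+2),
          poch (-((M+1:ℕ):ℂ)) j * poch (a+((M+1:ℕ):ℂ)) j *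
            ((j:ℂ) * poch (1+a-b-c-(k:ℂ)) (j-1)) /
            ((j.factorial : ℂ) * poch (1+a-b) j * poch (1+a-c) j)
          = -((((M+1:ℕ):ℂ) * (a+((M+1:ℕ):ℂ)) / ((1+a-b)*(1+a-c))) *
              (poch (b+1) M * poch (c+1) M * Q2 k (a+2) (b+1) (c+1) M /
                (poch (1+(a+2)-(b+1)) M * poch (1+(a+2)-(c+1)) M))) := by
        rw [Finset.sum_range_succ']
        have g0 : poch (-((M+1:ℕ):ℂ)) 0 * poch (a+((M+1:ℕ):ℂ)) 0 *
            (((0:ℕ):ℂ) * poch (1+a-b-c-(k:ℂ)) (0-1)) /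
            (((Nat.factorial 0 : ℕ) : ℂ) * poch (1+a-b) 0 * poch (1+a-c) 0) = 0 := by
          simp
        rw [g0, add_zero]
        have per : ∀ i ∈ Finset.range (M+1),
            poch (-((M+1:ℕ):ℂ)) (i+1) * poch (a+((M+1:ℕ):ℂ)) (i+1) *
              (((i+1:ℕ):ℂ) * poch (1+a-b-c-(k:ℂ)) (i+1-1)) /
              (((i+1).factorial : ℂ) * poch (1+a-b) (i+1) * poch (1+a-c) (i+1))
            = -((((M+1:ℕ):ℂ) * (a+((M+1:ℕ):ℂ)) / ((1+a-b)*(1+a-c))) *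
                (poch (-(M:ℂ)) i * poch ((a+2)+(M:ℂ)) i *
                  poch (1+(a+2)-(b+1)-(c+1)-(k:ℂ)) i /
                  ((i.factorial : ℂ) * poch (1+(a+2)-(b+1)) i * poch (1+(a+2)-(c+1)) i))) := by
          intro i _
          have p1 : poch (-((M+1:ℕ):ℂ)) (i+1) = -((M+1:ℕ):ℂ) * poch (-(M:ℂ)) i := by
            rw [poch_succ']
            congr 2
            push_cast; ring
          have p2 : poch (a+((M+1:ℕ):ℂ)) (i+1)
              = (a+((M+1:ℕ):ℂ)) * poch ((a+2)+(M:ℂ)) i := by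
            rw [poch_succ']
            congr 2
            push_cast; ring
          have p3 : poch (1+a-b) (i+1) = (1+a-b) * poch (1+(a+2)-(b+1)) i := by
            rw [poch_succ']
            congr 2
            ring
          have p4 : poch (1+a-c) (i+1) = (1+a-c) * poch (1+(a+2)-(c+1)) i := by
            rw [poch_succ']
            congr 2
            ring
          have p5 : (((i+1).factorial : ℕ):ℂ) = ((i+1:ℕ):ℂ) * ((i.factorial : ℕ):ℂ) := by
            rw [Nat.factorial_succ]; push_cast; ring
          have p6 : poch (1+(a+2)-(b+1)-(c+1)-(k:ℂ)) i = poch (1+a-b-c-(k:ℂ)) i := by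
            congr 1
            ring
          rw [p1, p2, p3, p4, p5, p6, Nat.add_sub_cancel]
          have hi1 : (i:ℂ) + 1 ≠ 0 := by
            have h' : ((i+1:ℕ):ℂ) ≠ 0 := Nat.cast_ne_zero.2 (by omega)
            push_cast at h'
            exact h'
          have hfi := factorial_ne_zero' i
          by_cases hbp : poch (1+(a+2)-(b+1)) i = 0
          · rw [hbp]; simp
          by_cases hcp : poch (1+(a+2)-(c+1)) i = 0
          · rw [hcp]; simp
          push_cast
          field_simp
        rw [Finset.sum_congr rfl per, Finset.sum_neg_distrib, ← Finset.mul_sum]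
        rw [ih (a+2) (b+1) (c+1) M hbc' hC1 hD1]
      rw [second]
      -- final algebra
      rw [Q2_rec k M a b c hb hc]
      have q1 : poch b (M+1) = b * poch (b+1) M := poch_succ' b M
      have q2 : poch c (M+1) = c * poch (c+1) M := poch_succ' c M
      have q3 : poch (1+a-b) (M+1) = (1+a-b) * poch (1+(a+2)-(b+1)) M := by
        rw [poch_succ']
        congr 2
        ring
      have q4 : poch (1+a-c) (M+1) = (1+a-c) * poch (1+(a+2)-(c+1)) M := by
        rw [poch_succ']
        congr 2
        ring
      rw [q1, q2, q3, q4]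
      field_simp
      ring

lemma neg_one_pow_two_mul (j : ℕ) : ((-1:ℂ))^(2*j) = 1 := by
  rw [pow_mul]
  norm_num

lemma key_lemma (a w : ℂ) (m j : ℕ) (hj : j ≤ m) :
    poch (1+a-w) j * poch (w-a) m
    = (-1)^j * poch (w-a-(j:ℂ)) (m-j) * poch (1+a-w-(m:ℂ)) (2*j) := by
  have k1 : poch (1+a-w) j = (-1)^j * poch (w-a-(j:ℂ)) j := by
    have := poch_reflect' (w-a-(j:ℂ)) j
    rw [show 1-(w-a-(j:ℂ))-(j:ℂ) = 1+a-w by ring] at this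
    exact this.symm ▸ this
  have k2 : poch (w-a-(j:ℂ)) j * poch (w-a) m = poch (w-a-(j:ℂ)) (j+m) := by
    rw [poch_add (w-a-(j:ℂ)) j m, show w-a-(j:ℂ)+(j:ℂ) = w-a by ring]
  have k3 : poch (w-a-(j:ℂ)) (j+m)
      = poch (w-a-(j:ℂ)) (m-j) * poch (w-a+(m:ℂ)-2*(j:ℂ)) (2*j) := by
    rw [show j+m = (m-j)+2*j by omega, poch_add]
    congr 2
    rw [Nat.cast_sub hj]
    ring
  have k4 : poch (1+a-w-(m:ℂ)) (2*j) = poch (w-a+(m:ℂ)-2*(j:ℂ)) (2*j) := by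
    have := poch_reflect' (w-a+(m:ℂ)-2*(j:ℂ)) (2*j)
    rw [show 1-(w-a+(m:ℂ)-2*(j:ℂ))-((2*j:ℕ):ℂ) = 1+a-w-(m:ℂ) by push_cast; ring,
      neg_one_pow_two_mul, one_mul] at this
    exact this
  rw [k1, mul_assoc, k2, k3, k4]
  ring

/-- Extension of Bailey's finite summation relating a `(1+k)`-balanced
terminating ₅F₄(1) to a nearly poised terminating series of order `4 + 2k`. -/
theorem statement_18 (k m : ℕ) (a b c w : ℂ)
    (hbc : poch b k * poch c k ≠ 0)
    (h1 : poch (1 + a - b) m ≠ 0) (h2 : poch (1 + a - c) m ≠ 0)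
    (h3 : poch (1 / 2 + (a - w - m) / 2) m ≠ 0)
    (h4 : poch (1 + (a - w - m) / 2) m ≠ 0)
    (h5 : poch w m ≠ 0) (h6 : poch (w - a) m ≠ 0) :
    (∑ n ∈ Finset.range (m + 1),
      poch (a / 2) n * poch (1 / 2 + a / 2) n * poch (1 - (k : ℂ) + a - b - c) n *
        poch (1 + a - w) n * poch (-(m : ℂ)) n /
        ((n.factorial : ℂ) * poch (1 + a - b) n * poch (1 + a - c) n *
          poch (1 / 2 + (a - w - m) / 2) n * poch (1 + (a - w - m) / 2) n))
    = poch w m / poch (w - a) m *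
      ∑ n ∈ Finset.range (m + 1),
        poch a n * poch b n * poch c n * poch (-(m : ℂ)) n /
          ((n.factorial : ℂ) * poch (1 + a - b) n * poch (1 + a - c) n * poch w n) *
          Q2 k a b c n := by
  -- step 1 : rewrite RHS terms via extSaal
  have s1 : ∀ n ∈ Finset.range (m+1),
      poch a n * poch b n * poch c n * poch (-(m : ℂ)) n /
          ((n.factorial : ℂ) * poch (1 + a - b) n * poch (1 + a - c) n * poch w n) *
          Q2 k a b c n
      = ∑ j ∈ Finset.range (n+1),
          (poch a n * poch (-(m:ℂ)) n / ((n.factorial : ℂ) * poch w n)) *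
            (poch (-(n:ℂ)) j * poch (a+(n:ℂ)) j * poch (1+a-b-c-(k:ℂ)) j /
              ((j.factorial : ℂ) * poch (1+a-b) j * poch (1+a-c) j)) := by
    intro n hn
    rw [Finset.mem_range] at hn
    have hCn : poch (1+a-b) n ≠ 0 := poch_prefix_ne_zero h1 (by omega)
    have hDn : poch (1+a-c) n ≠ 0 := poch_prefix_ne_zero h2 (by omega)
    have hwn : poch w n ≠ 0 := poch_prefix_ne_zero h5 (by omega)
    have hfn := factorial_ne_zero' n
    rw [← Finset.mul_sum, extSaal k a b c n hbc hCn hDn]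
    field_simp
  rw [Finset.sum_congr rfl s1]
  -- step 2 : swap
  rw [sum_triangle _ (fun j n hnj => by
    rw [poch_neg_nat_eq_zero hnj]
    ring)]
  -- step 3 : evaluate inner sums
  have s3 : ∀ j ∈ Finset.range (m+1),
      ∑ n ∈ Finset.range (m+1),
        (poch a n * poch (-(m:ℂ)) n / ((n.factorial : ℂ) * poch w n)) *
          (poch (-(n:ℂ)) j * poch (a+(n:ℂ)) j * poch (1+a-b-c-(k:ℂ)) j /
            ((j.factorial : ℂ) * poch (1+a-b) j * poch (1+a-c) j))
      = ((-1)^j * poch a (2*j) * poch (-(m:ℂ)) j * poch (1+a-b-c-(k:ℂ)) j /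
          ((j.factorial : ℂ) * poch (1+a-b) j * poch (1+a-c) j * poch w j)) *
        (poch (w-a-(j:ℂ)) (m-j) / poch (w+(j:ℂ)) (m-j)) := by
    intro j hj
    rw [Finset.mem_range] at hj
    have hjm : j ≤ m := by omega
    have hwsplit : poch w m = poch w j * poch (w+(j:ℂ)) (m-j) := by
      have := poch_add w j (m-j); rw [show j+(m-j) = m by omega] at this; exact this
    have hwj : poch w j ≠ 0 := poch_prefix_ne_zero h5 hjm
    have hwt : poch (w+(j:ℂ)) (m-j) ≠ 0 := by
      rw [hwsplit] at h5; exact right_ne_zero_of_mul h5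
    rw [sum_shift hjm _ (fun n hn => by
      rw [poch_neg_nat_eq_zero hn]
      ring)]
    have per : ∀ s ∈ Finset.range (m+1-j),
        (poch a (j+s) * poch (-(m:ℂ)) (j+s) / (((j+s).factorial : ℂ) * poch w (j+s))) *
          (poch (-((j+s:ℕ):ℂ)) j * poch (a+((j+s:ℕ):ℂ)) j * poch (1+a-b-c-(k:ℂ)) j /
            ((j.factorial : ℂ) * poch (1+a-b) j * poch (1+a-c) j))
        = ((-1)^j * poch a (2*j) * poch (-(m:ℂ)) j * poch (1+a-b-c-(k:ℂ)) j /
            ((j.factorial : ℂ) * poch (1+a-b) j * poch (1+a-c) j * poch w j)) *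
          (poch (-((m-j:ℕ):ℂ)) s * poch (a+2*(j:ℂ)) s /
            ((s.factorial : ℂ) * poch (w+(j:ℂ)) s)) := by
      intro s hs
      rw [Finset.mem_range] at hs
      have hsmj : s ≤ m-j := by omega
      have c1 : poch a (j+s) * poch (a+((j+s:ℕ):ℂ)) j
          = poch a (2*j) * poch (a+2*(j:ℂ)) s := by
        have ca : poch a ((j+s)+j) = poch a (j+s) * poch (a+((j+s:ℕ):ℂ)) j :=
          poch_add a (j+s) j
        have cb : poch a ((j+s)+j) = poch a (2*j) * poch (a+2*(j:ℂ)) s := by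
          rw [show (j+s)+j = 2*j+s by omega, poch_add]
          push_cast
          ring
        rw [← ca, cb]
      have c2 : poch (-(m:ℂ)) (j+s) = poch (-(m:ℂ)) j * poch (-((m-j:ℕ):ℂ)) s := by
        rw [poch_add]
        congr 2
        rw [Nat.cast_sub hjm]; ring
      have c3 : poch w (j+s) = poch w j * poch (w+(j:ℂ)) s := poch_add w j s
      have c4 : poch (-((j+s:ℕ):ℂ)) j = (-1)^j * poch ((s:ℂ)+1) j := poch_neg_cast j s
      have c5 : ((s.factorial : ℕ):ℂ) * poch ((s:ℂ)+1) j = (((s+j).factorial : ℕ):ℂ) :=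
        poch_factorial s j
      have c6 : (((j+s).factorial : ℕ) : ℂ) = (((s+j).factorial : ℕ) : ℂ) := by
        rw [Nat.add_comm]
      have hws : poch (w+(j:ℂ)) s ≠ 0 := poch_prefix_ne_zero hwt hsmj
      have hfs := factorial_ne_zero' s
      have hfj := factorial_ne_zero' j
      have hps : poch ((s:ℂ)+1) j ≠ 0 := by
        intro h0
        rw [h0, mul_zero] at c5
        exact (factorial_ne_zero' (s+j)) c5.symm
      have hCj : poch (1+a-b) j ≠ 0 := poch_prefix_ne_zero h1 hjm
      have hDj : poch (1+a-c) j ≠ 0 := poch_prefix_ne_zero h2 hjm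
      rw [c2, c3, c4, c6, ← c5]
      have hden1 : ((s.factorial:ℂ) * poch ((s:ℂ)+1) j) * (poch w j * poch (w+(j:ℂ)) s)
          ≠ 0 := by
        exact mul_ne_zero (mul_ne_zero hfs hps) (mul_ne_zero hwj hws)
      have hden1' : (((s.factorial:ℂ) * poch ((s:ℂ)+1) j) * (poch w j * poch (w+(j:ℂ)) s))
          * ((j.factorial:ℂ) * poch (1+a-b) j * poch (1+a-c) j) ≠ 0 :=
        mul_ne_zero hden1 (mul_ne_zero (mul_ne_zero hfj hCj) hDj)
      have hden2' : ((j.factorial:ℂ) * poch (1+a-b) j * poch (1+a-c) j * poch w j)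
          * ((s.factorial:ℂ) * poch (w+(j:ℂ)) s) ≠ 0 :=
        mul_ne_zero (mul_ne_zero (mul_ne_zero (mul_ne_zero hfj hCj) hDj) hwj)
          (mul_ne_zero hfs hws)
      rw [div_mul_div_comm, div_mul_div_comm, div_eq_div_iff hden1' hden2']
      linear_combination ((-1:ℂ)^j * poch ((s:ℂ)+1) j * poch (-(m:ℂ)) j *
        poch (-((m-j:ℕ):ℂ)) s * poch (1+a-b-c-(k:ℂ)) j *
        ((j.factorial:ℂ) * poch (1+a-b) j * poch (1+a-c) j * poch w j *
          ((s.factorial:ℂ) * poch (w+(j:ℂ)) s))) * c1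
    rw [Finset.sum_congr rfl per, ← Finset.mul_sum,
      show m+1-j = (m-j)+1 by omega]
    have hv := vand1 (a+2*(j:ℂ)) (w+(j:ℂ)) (m-j) hwt
    rw [hv, show w+(j:ℂ)-(a+2*(j:ℂ)) = w-a-(j:ℂ) by ring]
  rw [Finset.sum_congr rfl s3, Finset.mul_sum]
  -- step 4 : termwise identification
  refine Finset.sum_congr rfl (fun j hj => ?_)
  rw [Finset.mem_range] at hj
  have hjm : j ≤ m := by omega
  have dup1 : poch a (2*j) = 4^j * poch (a/2) j * poch (1/2+a/2) j := by
    rw [poch_dup a j]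
    congr 2
    ring
  have dup2 : poch (1+a-w-(m:ℂ)) (2*j)
      = 4^j * poch (1/2+(a-w-(m:ℂ))/2) j * poch (1+(a-w-(m:ℂ))/2) j := by
    have hd := poch_dup (1+a-w-(m:ℂ)) j
    rw [show (1+a-w-(m:ℂ))/2+1/2 = 1+(a-w-(m:ℂ))/2 by ring] at hd
    rw [show (1+a-w-(m:ℂ))/2 = 1/2+(a-w-(m:ℂ))/2 by ring] at hd
    exact hd
  have hkey := key_lemma a w m j hjm
  have hwsplit : poch w m = poch w j * poch (w+(j:ℂ)) (m-j) := by
    have := poch_add w j (m-j); rw [show j+(m-j) = m by omega] at this; exact this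
  have hwj : poch w j ≠ 0 := poch_prefix_ne_zero h5 hjm
  have hwt : poch (w+(j:ℂ)) (m-j) ≠ 0 := by
    have h5' := h5
    rw [hwsplit] at h5'; exact right_ne_zero_of_mul h5'
  have hCj : poch (1+a-b) j ≠ 0 := poch_prefix_ne_zero h1 hjm
  have hDj : poch (1+a-c) j ≠ 0 := poch_prefix_ne_zero h2 hjm
  have h3j : poch (1/2+(a-w-(m:ℂ))/2) j ≠ 0 := poch_prefix_ne_zero h3 hjm
  have h4j : poch (1+(a-w-(m:ℂ))/2) j ≠ 0 := poch_prefix_ne_zero h4 hjm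
  have hfj := factorial_ne_zero' j
  have hBk : poch (1-(k:ℂ)+a-b-c) j = poch (1+a-b-c-(k:ℂ)) j := by
    congr 1; ring
  have h4pow : (4:ℂ)^j ≠ 0 := pow_ne_zero _ (by norm_num)
  rw [dup2] at hkey
  have hDL : ((j.factorial:ℂ) * poch (1+a-b) j * poch (1+a-c) j *
      poch (1/2+(a-w-(m:ℂ))/2) j * poch (1+(a-w-(m:ℂ))/2) j) ≠ 0 :=
    mul_ne_zero (mul_ne_zero (mul_ne_zero (mul_ne_zero hfj hCj) hDj) h3j) h4j
  have hR : poch (w-a) m * (((j.factorial:ℂ) * poch (1+a-b) j * poch (1+a-c) j *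
      poch w j) * poch (w+(j:ℂ)) (m-j)) ≠ 0 :=
    mul_ne_zero h6
      (mul_ne_zero (mul_ne_zero (mul_ne_zero (mul_ne_zero hfj hCj) hDj) hwj) hwt)
  rw [hBk, dup1, hwsplit, div_mul_div_comm, div_mul_div_comm, div_eq_div_iff hDL hR]
  linear_combination (poch (a/2) j * poch (1/2+a/2) j * poch (1+a-b-c-(k:ℂ)) j *
    poch (-(m:ℂ)) j * (j.factorial:ℂ) * poch (1+a-b) j * poch (1+a-c) j *
    poch w j * poch (w+(j:ℂ)) (m-j)) * hkey
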